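/- arXiv:2505.13548 — 3 statements merged into one kernel-verified Lean document; each statement's English description precedes it below -/
import Mathlib

section
/- (Left actions of E⁻¹.) For every integrable h : α → ℝ: (i) ∫ (E⁻¹ h) dμ = (1/⟨W⟩) · ∫ W·h dμ; (ii) ∫ W·(E⁻¹ h) dμ = (1/⟨W⁻¹⟩) · ( (2/⟨W⟩)·∫ W·h dμ − ∫ h dμ ). -/
open MeasureTheory

/-- Total (coordinate) volume `V := μ(α)` as a real number. -/
noncomputable def totalVol {α : Type*} [MeasurableSpace α] (μ : Measure α) : ℝ :=
  (μ Set.univ).toReal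

/-- Spatial average `⟨f⟩ := (1/V) ∫ f dμ`. -/
noncomputable def avg {α : Type*} [MeasurableSpace α] (μ : Measure α) (f : α → ℝ) : ℝ :=
  (totalVol μ)⁻¹ * ∫ x, f x ∂μ

/-- The delocalization operator `E`:
`(E g)(x) = g(x) + ⟨g⟩ − W(x)⁻¹ ⟨W·g⟩`. -/
noncomputable def opE {α : Type*} [MeasurableSpace α] (μ : Measure α) (W : α → ℝ)
    (g : α → ℝ) : α → ℝ :=
  fun x => g x + avg μ g - (W x)⁻¹ * avg μ (fun y => W y * g y)

/-- The operator `E⁻¹`: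
`(E⁻¹ h)(x) = h(x) − W(x)⁻¹ (∫h)/(∫W⁻¹) − (∫W·h)/(∫W) + 2 W(x)⁻¹ V (∫W·h)/((∫W⁻¹)(∫W))`. -/
noncomputable def opEinv {α : Type*} [MeasurableSpace α] (μ : Measure α) (W : α → ℝ)
    (h : α → ℝ) : α → ℝ :=
  fun x => h x
    - (W x)⁻¹ * (∫ y, h y ∂μ) / (∫ y, (W y)⁻¹ ∂μ)
    - (∫ y, W y * h y ∂μ) / (∫ y, W y ∂μ)
    + 2 * (W x)⁻¹ * totalVol μ * (∫ y, W y * h y ∂μ)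
        / ((∫ y, (W y)⁻¹ ∂μ) * (∫ y, W y ∂μ))

/-- The projector-type operator `G₊`:
`(G₊ h)(x) = W(x)·h(x) − W(x)·(∫W·h)/(∫W)`. -/
noncomputable def opGplus {α : Type*} [MeasurableSpace α] (μ : Measure α) (W : α → ℝ)
    (h : α → ℝ) : α → ℝ :=
  fun x => W x * h x - W x * (∫ y, W y * h y ∂μ) / (∫ y, W y ∂μ)

/-- The projector-type operator `G₋`:
`(G₋ h)(x) = W(x)⁻¹·h(x) − W(x)⁻¹·(∫W⁻¹·h)/(∫W⁻¹)`. -/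
noncomputable def opGminus {α : Type*} [MeasurableSpace α] (μ : Measure α) (W : α → ℝ)
    (h : α → ℝ) : α → ℝ :=
  fun x => (W x)⁻¹ * h x - (W x)⁻¹ * (∫ y, (W y)⁻¹ * h y ∂μ) / (∫ y, (W y)⁻¹ ∂μ)

/-!
`E⁻¹ h` differs from `h` by `a · W⁻¹ - b` for two constants `a, b` built from `∫ h`, `∫ W h`,
`∫ W⁻¹`, `∫ W` and `V`. Integrating against `1` and against `W` is therefore linear in `a` and
`b`, and both identities reduce to field arithmetic once `∫ W⁻¹` and `∫ W` are known to be
positive.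
-/

section

variable {α : Type*} [MeasurableSpace α] {μ : Measure α}

lemma integral_pos_of_forall_pos {f : α → ℝ} (hf : ∀ x, 0 < f x) (hfi : Integrable f μ)
    (hμ : μ ≠ 0) : 0 < ∫ x, f x ∂μ := by
  rw [integral_pos_iff_support_of_nonneg (fun x => (hf x).le) hfi,
    Function.support_eq_univ fun x => (hf x).ne']
  exact Measure.measure_univ_pos.mpr hμ

lemma opEinv_apply_eq_add_inv_mul_sub_const (W h : α → ℝ) (x : α) :
    opEinv μ W h x = h x
      + (W x)⁻¹ * (2 * totalVol μ * (∫ y, W y * h y ∂μ)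
          / ((∫ y, (W y)⁻¹ ∂μ) * (∫ y, W y ∂μ)) - (∫ y, h y ∂μ) / (∫ y, (W y)⁻¹ ∂μ))
      - (∫ y, W y * h y ∂μ) / (∫ y, W y ∂μ) := by
  simp only [opEinv]
  ring

variable [IsFiniteMeasure μ] {W h : α → ℝ}

lemma integral_add_inv_mul_sub_const (hh : Integrable h μ)
    (hWinv : Integrable (fun x => (W x)⁻¹) μ) (a b : ℝ) :
    ∫ x, (h x + (W x)⁻¹ * a - b) ∂μ
      = ∫ x, h x ∂μ + (∫ x, (W x)⁻¹ ∂μ) * a - totalVol μ * b := by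
  have hsum : Integrable (fun x => h x + (W x)⁻¹ * a) μ := hh.add (hWinv.mul_const a)
  rw [integral_sub hsum (integrable_const b),
    integral_add hh (hWinv.mul_const a), integral_mul_const, integral_const, smul_eq_mul]
  rfl

lemma integral_mul_add_inv_mul_sub_const (hWh : Integrable (fun x => W x * h x) μ)
    (hWi : Integrable W μ) (hW : ∀ x, W x ≠ 0) (a b : ℝ) :
    ∫ x, W x * (h x + (W x)⁻¹ * a - b) ∂μ
      = ∫ x, W x * h x ∂μ + totalVol μ * a - (∫ x, W x ∂μ) * b := by
  have hexpand : ∀ x, W x * (h x + (W x)⁻¹ * a - b) = W x * h x + a - W x * b := fun x => by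
    rw [mul_sub, mul_add, mul_inv_cancel_left₀ (hW x)]
  simp only [hexpand]
  have hsum : Integrable (fun x => W x * h x + a) μ := hWh.add (integrable_const a)
  rw [integral_sub hsum (hWi.mul_const b),
    integral_add hWh (integrable_const a), integral_mul_const, integral_const, smul_eq_mul]
  rfl

end

theorem opEinv_left_actions_general
    {α : Type*} [MeasurableSpace α] (μ : Measure α) [IsFiniteMeasure μ]
    (hV : 0 < totalVol μ)
    (W : α → ℝ) (hW : Measurable W)
    (c C : ℝ) (hc : 0 < c)
    (hbound : ∀ x, c ≤ W x ∧ W x ≤ C) :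
    ∀ h : α → ℝ, Integrable h μ →
      (∫ x, opEinv μ W h x ∂μ = (avg μ W)⁻¹ * ∫ x, W x * h x ∂μ) ∧
      (∫ x, W x * opEinv μ W h x ∂μ
        = (avg μ (fun y => (W y)⁻¹))⁻¹
            * ((2 / avg μ W) * (∫ x, W x * h x ∂μ) - ∫ x, h x ∂μ)) := by
  intro h hh
  have hWpos : ∀ x, 0 < W x := fun x => hc.trans_le (hbound x).1
  have hWbdd : ∀ᵐ x ∂μ, ‖W x‖ ≤ C := ae_of_all _ fun x => by
    rw [Real.norm_of_nonneg (hWpos x).le]; exact (hbound x).2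
  have hWint : Integrable W μ := .of_bound hW.aestronglyMeasurable C hWbdd
  have hWinv : Integrable (fun x => (W x)⁻¹) μ := .of_bound hW.inv.aestronglyMeasurable c⁻¹ <|
    ae_of_all _ fun x => by
      rw [Real.norm_of_nonneg (inv_pos.mpr (hWpos x)).le]; exact inv_anti₀ hc (hbound x).1
  have hWh : Integrable (fun x => W x * h x) μ := hh.bdd_mul hW.aestronglyMeasurable hWbdd
  have hμ : μ ≠ 0 := by rintro rfl; simp [totalVol] at hV
  have hI := (integral_pos_of_forall_pos (fun x => inv_pos.mpr (hWpos x)) hWinv hμ).ne'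
  have hJ := (integral_pos_of_forall_pos hWpos hWint hμ).ne'
  simp only [opEinv_apply_eq_add_inv_mul_sub_const, integral_add_inv_mul_sub_const hh hWinv,
    integral_mul_add_inv_mul_sub_const hWh hWint fun x => (hWpos x).ne', avg]
  have hV' := hV.ne'
  generalize ∫ x, (W x)⁻¹ ∂μ = I at *
  generalize ∫ x, W x ∂μ = J at *
  constructor <;> field_simp <;> ring

/-- Left actions of `E⁻¹`. For every integrable `h`:
(i) `∫ (E⁻¹ h) dμ = (1/⟨W⟩) · ∫ W·h dμ`;
(ii) `∫ W·(E⁻¹ h) dμ = (1/⟨W⁻¹⟩) · ((2/⟨W⟩)·∫ W·h dμ − ∫ h dμ)`. -/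
theorem opEinv_left_actions
    {α : Type*} [MeasurableSpace α] (μ : Measure α) [IsFiniteMeasure μ]
    (hV : 0 < totalVol μ)
    (W : α → ℝ) (hW : Measurable W)
    (c C : ℝ) (hc : 0 < c) (hcC : c ≤ C)
    (hbound : ∀ x, c ≤ W x ∧ W x ≤ C) :
    ∀ h : α → ℝ, Integrable h μ →
      (∫ x, opEinv μ W h x ∂μ = (avg μ W)⁻¹ * ∫ x, W x * h x ∂μ) ∧
      (∫ x, W x * opEinv μ W h x ∂μ
        = (avg μ (fun y => (W y)⁻¹))⁻¹
            * ((2 / avg μ W) * (∫ x, W x * h x ∂μ) - ∫ x, h x ∂μ)) :=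
  opEinv_left_actions_general μ hV W hW c C hc hbound
end

section
/- (Corollary on E_ab⁻¹ and the constant function.) (i) E_ab⁻¹ applied to the constant function 1 is independent of A and equals B/⟨B⟩: for every x ∈ α, (E_ab⁻¹ 1)(x) = B(x)/⟨B⟩. (ii) The integral of E_ab⁻¹ h is independent of B: for every integrable h, ∫ (E_ab⁻¹ h) dμ = (1/⟨A⟩) · ∫ A·h dμ. (iii) ∫ (E_ab⁻¹ 1) dμ = V, independent of both A and B. -/
open MeasureTheory

/-- The generalized delocalization operator `E_ab`:
`(E_ab f)(x) = ⟨f⟩ + A(x)⁻¹·(B(x)⁻¹·f(x) − ⟨B⁻¹·f⟩)`. -/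
noncomputable def opEab {α : Type*} [MeasurableSpace α] (μ : Measure α) (A B : α → ℝ)
    (f : α → ℝ) : α → ℝ :=
  fun x => avg μ f + (A x)⁻¹ * ((B x)⁻¹ * f x - avg μ (fun y => (B y)⁻¹ * f y))

/-- The operator `E_ab⁻¹`:
`(E_ab⁻¹ h)(x) = B(x)·A(x)·h(x) − B(x)·A(x)·(∫A·h)/(∫A) − B(x)·(∫B·A·h)/(∫B)
  + B(x)·((V + ∫B·A)/(∫B))·(∫A·h)/(∫A)`. -/
noncomputable def opEabInv {α : Type*} [MeasurableSpace α] (μ : Measure α) (A B : α → ℝ)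
    (h : α → ℝ) : α → ℝ :=
  fun x => B x * A x * h x
    - B x * A x * (∫ y, A y * h y ∂μ) / (∫ y, A y ∂μ)
    - B x * (∫ y, B y * A y * h y ∂μ) / (∫ y, B y ∂μ)
    + B x * ((totalVol μ + ∫ y, B y * A y ∂μ) / (∫ y, B y ∂μ))
        * (∫ y, A y * h y ∂μ) / (∫ y, A y ∂μ)

/-!
The correction terms of `E_ab⁻¹` are arranged so that both identities are direct computations.
Applied to `1`, the `A`-weighted terms cancel because `(∫ A·1)/(∫ A) = 1`, leaving `B·V/∫ B`.
Integrating `E_ab⁻¹ h`, the two terms carrying `∫ B·A·h` cancel because `(∫ B)/(∫ B) = 1`, and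
the terms carrying `∫ B·A` cancel likewise, leaving `V·(∫ A·h)/(∫ A)`.
-/

section

variable {α : Type*} [MeasurableSpace α] {μ : Measure α}

theorem inv_avg (f : α → ℝ) : (avg μ f)⁻¹ = totalVol μ / ∫ x, f x ∂μ := by
  rw [avg, mul_inv, inv_inv, div_eq_mul_inv]

theorem mul_totalVol_le_integral [IsFiniteMeasure μ] {f : α → ℝ} {c : ℝ} (hf : Integrable f μ)
    (hcf : ∀ x, c ≤ f x) : c * totalVol μ ≤ ∫ x, f x ∂μ := by
  calc c * totalVol μ = ∫ _, c ∂μ := by rw [integral_const, smul_eq_mul, mul_comm]; rfl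
    _ ≤ ∫ x, f x ∂μ := integral_mono (integrable_const c) hf hcf

theorem memLp_top_of_nonneg_of_le {f : α → ℝ} {C : ℝ} (hf : Measurable f)
    (hf₀ : ∀ x, 0 ≤ f x) (hfC : ∀ x, f x ≤ C) : MemLp f ⊤ μ :=
  memLp_top_of_bound hf.aestronglyMeasurable C
    (ae_of_all _ fun x => (Real.norm_of_nonneg (hf₀ x)).trans_le (hfC x))

theorem opEabInv_one_apply (A B : α → ℝ) (hIA : ∫ x, A x ∂μ ≠ 0) (x : α) :
    opEabInv μ A B (fun _ => 1) x = B x / avg μ B := by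
  simp only [opEabInv, avg, mul_one]
  field_simp
  ring

theorem integral_opEabInv {A B h : α → ℝ} (hB : Integrable B μ)
    (hBA : Integrable (fun x => B x * A x) μ) (hBAh : Integrable (fun x => B x * A x * h x) μ)
    (hIB : ∫ x, B x ∂μ ≠ 0) :
    ∫ x, opEabInv μ A B h x ∂μ = totalVol μ * (∫ x, A x * h x ∂μ) / ∫ x, A x ∂μ := by
  set a := (∫ x, A x * h x ∂μ) / ∫ x, A x ∂μ
  set b := (∫ x, B x * A x * h x ∂μ) / ∫ x, B x ∂μ
  set v := (totalVol μ + ∫ x, B x * A x ∂μ) / ∫ x, B x ∂μ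
  have hterms : ∀ x,
      opEabInv μ A B h x = B x * A x * h x - B x * A x * a - B x * b + B x * (v * a) := by
    intro x
    simp only [opEabInv, a, b, v]
    ring
  simp only [hterms]
  have hBAa : Integrable (fun x => B x * A x * a) μ := hBA.mul_const a
  have hBb : Integrable (fun x => B x * b) μ := hB.mul_const b
  have hBva : Integrable (fun x => B x * (v * a)) μ := hB.mul_const (v * a)
  have hBAh_a : Integrable (fun x => B x * A x * h x - B x * A x * a) μ := hBAh.sub hBAa
  have hBAh_a_b : Integrable (fun x => B x * A x * h x - B x * A x * a - B x * b) μ :=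
    hBAh_a.sub hBb
  rw [integral_add hBAh_a_b hBva, integral_sub hBAh_a hBb, integral_sub hBAh hBAa,
    integral_mul_const, integral_mul_const, integral_mul_const]
  simp only [a, b, v]
  field_simp
  ring

end

theorem opEabInv_constant_actions_general
    {α : Type*} [MeasurableSpace α] (μ : Measure α) [IsFiniteMeasure μ]
    (hV : 0 < totalVol μ)
    (A B : α → ℝ) (hA : Measurable A) (hB : Measurable B)
    (c C : ℝ) (hc : 0 < c)
    (hboundA : ∀ x, c ≤ A x ∧ A x ≤ C) (hboundB : ∀ x, c ≤ B x ∧ B x ≤ C) :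
    (∀ x, opEabInv μ A B (fun _ => (1 : ℝ)) x = B x / avg μ B) ∧
    (∀ h : α → ℝ, Integrable h μ →
      ∫ x, opEabInv μ A B h x ∂μ = (avg μ A)⁻¹ * ∫ x, A x * h x ∂μ) ∧
    (∫ x, opEabInv μ A B (fun _ => (1 : ℝ)) x ∂μ = totalVol μ) := by
  have hA_top : MemLp A ⊤ μ := memLp_top_of_nonneg_of_le hA
    (fun x => hc.le.trans (hboundA x).1) (fun x => (hboundA x).2)
  have hB_top : MemLp B ⊤ μ := memLp_top_of_nonneg_of_le hB
    (fun x => hc.le.trans (hboundB x).1) (fun x => (hboundB x).2)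
  have hBA_top : MemLp (B * A) ⊤ μ := hA_top.mul hB_top
  have hIA : ∫ x, A x ∂μ ≠ 0 := ((mul_pos hc hV).trans_le
    (mul_totalVol_le_integral (hA_top.integrable le_top) fun x => (hboundA x).1)).ne'
  have hIB : ∫ x, B x ∂μ ≠ 0 := ((mul_pos hc hV).trans_le
    (mul_totalVol_le_integral (hB_top.integrable le_top) fun x => (hboundB x).1)).ne'
  have hintegral : ∀ h : α → ℝ, Integrable h μ →
      ∫ x, opEabInv μ A B h x ∂μ = (avg μ A)⁻¹ * ∫ x, A x * h x ∂μ := fun h hh => by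
    rw [integral_opEabInv (hB_top.integrable le_top) (hBA_top.integrable le_top)
      (hh.mul_of_top_right hBA_top) hIB, inv_avg]
    ring
  refine ⟨opEabInv_one_apply A B hIA, hintegral, ?_⟩
  rw [hintegral _ (integrable_const 1)]
  simp only [mul_one, inv_avg, div_mul_cancel₀ _ hIA]

/-- Corollary on `E_ab⁻¹` and the constant function.
(i) `(E_ab⁻¹ 1)(x) = B(x)/⟨B⟩` for every `x` (independent of `A`);
(ii) `∫ (E_ab⁻¹ h) dμ = (1/⟨A⟩)·∫ A·h dμ` for every integrable `h` (independent of `B`);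
(iii) `∫ (E_ab⁻¹ 1) dμ = V` (independent of both `A` and `B`). -/
theorem opEabInv_constant_actions
    {α : Type*} [MeasurableSpace α] (μ : Measure α) [IsFiniteMeasure μ]
    (hV : 0 < totalVol μ)
    (A B : α → ℝ) (hA : Measurable A) (hB : Measurable B)
    (c C : ℝ) (hc : 0 < c) (hcC : c ≤ C)
    (hboundA : ∀ x, c ≤ A x ∧ A x ≤ C) (hboundB : ∀ x, c ≤ B x ∧ B x ≤ C) :
    (∀ x, opEabInv μ A B (fun _ => (1 : ℝ)) x = B x / avg μ B) ∧
    (∀ h : α → ℝ, Integrable h μ →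
      ∫ x, opEabInv μ A B h x ∂μ = (avg μ A)⁻¹ * ∫ x, A x * h x ∂μ) ∧
    (∫ x, opEabInv μ A B (fun _ => (1 : ℝ)) x ∂μ = totalVol μ) :=
  opEabInv_constant_actions_general μ hV A B hA hB c C hc hboundA hboundB
end

section
/- (Kernel characterization for E_ab⁻¹.) For every integrable f : α → ℝ, the average-free part of B⁻¹·(E_ab⁻¹ f) vanishes μ-almost everywhere if and only if the average-free part of f vanishes μ-almost everywhere; that is, B(x)⁻¹·(E_ab⁻¹ f)(x) = ⟨B⁻¹·(E_ab⁻¹ f)⟩ for μ-a.e. x if and only if f(x) = ⟨f⟩ for μ-a.e. x. -/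
open MeasureTheory

/-! Off its constant terms, `B⁻¹ · E_ab⁻¹ f` is `A · (f - k)` with `k = ∫ A f / ∫ A` the
`A`-weighted mean of `f`. On a space of positive finite measure, `g = ⟨g⟩` a.e. says exactly
that `g` is a.e. constant, which is insensitive to adding constants. Since `A · (f - k)` has
integral zero, it is a.e. constant only when it vanishes a.e., i.e. (as `A > 0`) when `f = k`
a.e.; conversely, if `f` is a.e. equal to a constant, that constant is `k`. -/

open Filter

section Average

variable {α : Type*} [MeasurableSpace α] {μ : Measure α}

theorem avg_const (hV : totalVol μ ≠ 0) (c : ℝ) : avg μ (fun _ => c) = c := by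
  rw [avg, integral_const, smul_eq_mul, Measure.real, ← totalVol, inv_mul_cancel_left₀ hV]

theorem ae_eq_avg_iff_eventuallyConst (hV : totalVol μ ≠ 0) {f : α → ℝ} :
    (∀ᵐ x ∂μ, f x = avg μ f) ↔ EventuallyConst f (ae μ) := by
  rw [eventuallyConst_iff_exists_eventuallyEq]
  refine ⟨fun h => ⟨_, h⟩, fun ⟨c, hc⟩ => ?_⟩
  have hf_avg : avg μ f = c := by rw [avg, integral_congr_ae hc, ← avg, avg_const hV]
  rwa [hf_avg]

end Average

theorem eventuallyConst_add_const_iff {α β : Type*} [AddGroup β] {l : Filter α} {g : α → β}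
    (d : β) : EventuallyConst (fun x => g x + d) l ↔ EventuallyConst g l :=
  ⟨fun h => by simpa [Function.comp_def] using h.comp (· - d), fun h => h.comp (· + d)⟩

noncomputable def weightedMean {α : Type*} [MeasurableSpace α] (μ : Measure α) (A f : α → ℝ) :
    ℝ :=
  (∫ x, A x * f x ∂μ) / ∫ x, A x ∂μ

section WeightedMean

variable {α : Type*} [MeasurableSpace α] {μ : Measure α} {A f : α → ℝ}

theorem integral_mul_sub_weightedMean (hA : Integrable A μ)
    (hAf : Integrable (fun x => A x * f x) μ) (hA0 : ∫ x, A x ∂μ ≠ 0) :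
    ∫ x, A x * (f x - weightedMean μ A f) ∂μ = 0 := by
  simp_rw [mul_sub]
  rw [integral_sub hAf (hA.mul_const _), integral_mul_const, weightedMean,
    mul_div_cancel₀ _ hA0, sub_self]

theorem weightedMean_of_ae_eq_const (hA0 : ∫ x, A x ∂μ ≠ 0) {c : ℝ}
    (hf : f =ᵐ[μ] fun _ => c) : weightedMean μ A f = c := by
  have hAf : ∫ x, A x * f x ∂μ = ∫ x, A x * c ∂μ :=
    integral_congr_ae (hf.mono fun x hx => congrArg (A x * ·) hx)
  rw [weightedMean, hAf, integral_mul_const, mul_div_cancel_left₀ _ hA0]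

theorem eventuallyConst_mul_sub_weightedMean_iff (hV : totalVol μ ≠ 0) (hA : Integrable A μ)
    (hAf : Integrable (fun x => A x * f x) μ) (hA0 : ∫ x, A x ∂μ ≠ 0) (hA_ne : ∀ x, A x ≠ 0) :
    EventuallyConst (fun x => A x * (f x - weightedMean μ A f)) (ae μ) ↔
      EventuallyConst f (ae μ) := by
  constructor
  · intro h
    have hzero : avg μ (fun x => A x * (f x - weightedMean μ A f)) = 0 := by
      rw [avg, integral_mul_sub_weightedMean hA hAf hA0, mul_zero]
    rw [← ae_eq_avg_iff_eventuallyConst hV, hzero] at h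
    refine eventuallyConst_iff_exists_eventuallyEq.2 ⟨weightedMean μ A f, ?_⟩
    filter_upwards [h] with x hx
    exact sub_eq_zero.1 ((mul_eq_zero.1 hx).resolve_left (hA_ne x))
  · intro h
    obtain ⟨c, hc⟩ := eventuallyConst_iff_exists_eventuallyEq.1 h
    refine eventuallyConst_iff_exists_eventuallyEq.2 ⟨0, ?_⟩
    filter_upwards [hc] with x hx
    rw [weightedMean_of_ae_eq_const hA0 hc, hx, sub_self, mul_zero]

end WeightedMean

theorem inv_mul_opEabInv_eq {α : Type*} [MeasurableSpace α] (μ : Measure α) {A B : α → ℝ}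
    (hB : ∀ x, B x ≠ 0) (f : α → ℝ) :
    ∃ d, ∀ x, (B x)⁻¹ * opEabInv μ A B f x = A x * (f x - weightedMean μ A f) + d := by
  refine ⟨(totalVol μ + ∫ y, B y * A y ∂μ) / (∫ y, B y ∂μ) * weightedMean μ A f
    - (∫ y, B y * A y * f y ∂μ) / (∫ y, B y ∂μ), fun x => ?_⟩
  simp only [opEabInv, weightedMean]
  field_simp [hB x]
  ring

theorem opEabInv_kernel_characterization_general
    {α : Type*} [MeasurableSpace α] (μ : Measure α) [IsFiniteMeasure μ]
    (hV : 0 < totalVol μ)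
    (A B : α → ℝ) (hA : Measurable A)
    (c C : ℝ) (hc : 0 < c)
    (hboundA : ∀ x, c ≤ A x ∧ A x ≤ C) (hboundB : ∀ x, c ≤ B x ∧ B x ≤ C) :
    ∀ f : α → ℝ, Integrable f μ →
      ((∀ᵐ x ∂μ,
          (B x)⁻¹ * opEabInv μ A B f x
            = avg μ (fun y => (B y)⁻¹ * opEabInv μ A B f y))
        ↔ (∀ᵐ x ∂μ, f x = avg μ f)) := by
  intro f hf
  have hA_pos : ∀ x, 0 < A x := fun x => hc.trans_le (hboundA x).1
  have hA_norm : ∀ x, ‖A x‖ ≤ C := fun x => by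
    rw [Real.norm_of_nonneg (hA_pos x).le]; exact (hboundA x).2
  have hA_int : Integrable A μ := .of_bound hA.aestronglyMeasurable C (.of_forall hA_norm)
  have hAf_int : Integrable (fun x => A x * f x) μ :=
    hf.bdd_mul hA.aestronglyMeasurable (.of_forall hA_norm)
  have hA0 : 0 < ∫ x, A x ∂μ := by
    rw [integral_pos_iff_support_of_nonneg (fun x => (hA_pos x).le) hA_int,
      Function.support_eq_univ fun x => (hA_pos x).ne']
    exact (ENNReal.toReal_pos_iff.1 hV).1
  obtain ⟨d, hd⟩ := inv_mul_opEabInv_eq μ (fun x => (hc.trans_le (hboundB x).1).ne') f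
  rw [ae_eq_avg_iff_eventuallyConst hV.ne', ae_eq_avg_iff_eventuallyConst hV.ne', funext hd,
    eventuallyConst_add_const_iff]
  exact eventuallyConst_mul_sub_weightedMean_iff hV.ne' hA_int hAf_int hA0.ne'
    fun x => (hA_pos x).ne'

/-- Kernel characterization for `E_ab⁻¹`.
For every integrable `f`, the average-free part of `B⁻¹·(E_ab⁻¹ f)` vanishes μ-a.e.
iff the average-free part of `f` vanishes μ-a.e.:
`B(x)⁻¹·(E_ab⁻¹ f)(x) = ⟨B⁻¹·(E_ab⁻¹ f)⟩` μ-a.e. iff `f(x) = ⟨f⟩` μ-a.e. -/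
theorem opEabInv_kernel_characterization
    {α : Type*} [MeasurableSpace α] (μ : Measure α) [IsFiniteMeasure μ]
    (hV : 0 < totalVol μ)
    (A B : α → ℝ) (hA : Measurable A) (hB : Measurable B)
    (c C : ℝ) (hc : 0 < c) (hcC : c ≤ C)
    (hboundA : ∀ x, c ≤ A x ∧ A x ≤ C) (hboundB : ∀ x, c ≤ B x ∧ B x ≤ C) :
    ∀ f : α → ℝ, Integrable f μ →
      ((∀ᵐ x ∂μ,
          (B x)⁻¹ * opEabInv μ A B f x
            = avg μ (fun y => (B y)⁻¹ * opEabInv μ A B f y))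
        ↔ (∀ᵐ x ∂μ, f x = avg μ f)) :=
  opEabInv_kernel_characterization_general μ hV A B hA c C hc hboundA hboundB
end
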